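/- arXiv:1903.00390 — 3 statements merged into one kernel-verified Lean document; each statement's English description precedes it below -/
import Mathlib

section
/- Let q ∈ Δ, let A be an n × m real matrix, b ∈ ℝᵐ, and fix λ ∈ ℝᵐ. Define the Lagrangian L(p) = D_f(p, q) + ⟨Aᵀp − b, λ⟩ for p ∈ cl(Δ). If p_λ ∈ Δ satisfies ∇f(p_λ) = ∇f(q) − Aλ, then p_λ is the unique global minimizer of L over cl(Δ). -/
/-!
The gradient condition turns the three-point identity of Bregman distances into
`L p = L p_λ + D_f(p, p_λ)`. Restricting `f` to the segment from `p_λ` to `p` shows that a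
strictly convex function lies strictly above its tangent plane away from the point of
tangency, i.e. `D_f(p, p_λ) > 0` for `p ≠ p_λ`.
-/

open scoped RealInnerProductSpace Matrix

theorem StrictConvexOn.comp_affineMap {𝕜 E F β : Type*} [Field 𝕜] [LinearOrder 𝕜]
    [AddCommGroup E] [AddCommGroup F] [Module 𝕜 E] [Module 𝕜 F]
    [AddCommMonoid β] [PartialOrder β] [SMul 𝕜 β] {f : F → β} {s : Set F}
    (hf : StrictConvexOn 𝕜 s f) (g : E →ᵃ[𝕜] F) (hg : Function.Injective g) :
    StrictConvexOn 𝕜 (g ⁻¹' s) (f ∘ g) :=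
  ⟨hf.1.affine_preimage g, fun x hx y hy hxy a b ha hb hab =>
    calc (f ∘ g) (a • x + b • y) = f (a • g x + b • g y) := by
          rw [Function.comp_apply, Convex.combo_affine_apply hab]
      _ < a • f (g x) + b • f (g y) := hf.2 hx hy (hg.ne hxy) ha hb hab⟩

theorem StrictConvexOn.add_apply_sub_lt_of_hasFDerivAt {E : Type*} [NormedAddCommGroup E]
    [NormedSpace ℝ E] {s : Set E} {f : E → ℝ} {f' : E →L[ℝ] ℝ} {x y : E}
    (hf : StrictConvexOn ℝ s f) (hx : x ∈ s) (hy : y ∈ s) (hxy : x ≠ y)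
    (hf' : HasFDerivAt f f' x) : f x + f' (y - x) < f y := by
  let g : ℝ →ᵃ[ℝ] E := AffineMap.lineMap x y
  have hg : HasDerivAt (f ∘ g) (f' (y - x)) 0 := by
    refine HasFDerivAt.comp_hasDerivAt (0 : ℝ) ?_ AffineMap.hasDerivAt_lineMap
    rwa [AffineMap.lineMap_apply_zero]
  have hslope := (hf.comp_affineMap g (AffineMap.lineMap_injective ℝ hxy)).lt_slope_of_hasDerivAt
    (by simpa [g] using hx) (by simpa [g] using hy) zero_lt_one hg
  simp only [slope_def_field, Function.comp_apply, g, AffineMap.lineMap_apply_zero,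
    AffineMap.lineMap_apply_one, sub_zero, div_one] at hslope
  linarith

section Bregman

variable {E : Type*} [NormedAddCommGroup E] [InnerProductSpace ℝ E] [CompleteSpace E]

noncomputable def bregman (f : E → ℝ) (p q : E) : ℝ := f p - f q - ⟪gradient f q, p - q⟫

theorem bregman_add_bregman (f : E → ℝ) (p q r : E) :
    bregman f p r + bregman f r q = bregman f p q - ⟪gradient f r - gradient f q, p - r⟫ := by
  simp only [bregman, inner_sub_left, inner_sub_right]
  ring

theorem bregman_pos {s : Set E} {f : E → ℝ} {p q : E} (hf : StrictConvexOn ℝ s f)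
    (hp : p ∈ s) (hq : q ∈ s) (hpq : p ≠ q) (hfq : DifferentiableAt ℝ f q) :
    0 < bregman f p q := by
  have := hf.add_apply_sub_lt_of_hasFDerivAt hq hp hpq.symm hfq.hasGradientAt.hasFDerivAt
  rw [InnerProductSpace.toDual_apply_apply] at this
  rw [bregman]
  linarith

theorem bregman_add_inner_eq {f : E → ℝ} {c q r : E} (hr : gradient f r = gradient f q - c)
    (p : E) : bregman f p q + ⟪c, p⟫ = bregman f r q + ⟪c, r⟫ + bregman f p r := by
  have := bregman_add_bregman f p q r
  rw [hr, sub_sub_cancel_left, inner_neg_left, inner_sub_right] at this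
  linarith

end Bregman

theorem sum_transpose_mulVec_sub_mul {ι κ : Type*} [Fintype ι] [Fintype κ] (A : Matrix ι κ ℝ)
    (b lam : κ → ℝ) (p : EuclideanSpace ℝ ι) :
    ∑ j, (∑ i, A i j * p i - b j) * lam j = ⟪WithLp.toLp 2 (A *ᵥ lam), p⟫ - b ⬝ᵥ lam := by
  simp only [PiLp.inner_apply, RCLike.inner_apply, conj_trivial, dotProduct,
    sub_mul, Finset.sum_sub_distrib, Finset.sum_mul]
  rw [Finset.sum_comm]
  congr 1
  refine Finset.sum_congr rfl fun i _ => ?_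
  simp only [Matrix.mulVec, dotProduct, Finset.mul_sum]
  exact Finset.sum_congr rfl fun j _ => by ring

theorem lagrangian_unique_global_min_general {n m : ℕ} {Δ : Set (EuclideanSpace ℝ (Fin n))}
    (hopen : IsOpen Δ)
    {f : EuclideanSpace ℝ (Fin n) → ℝ}
    (hdiff : DifferentiableOn ℝ f Δ)
    (hsc : StrictConvexOn ℝ (closure Δ) f)
    {D : EuclideanSpace ℝ (Fin n) → EuclideanSpace ℝ (Fin n) → ℝ}
    (hD : ∀ p q, D p q = f p - f q - ⟪gradient f q, p - q⟫)
    {q : EuclideanSpace ℝ (Fin n)}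
    (A : Matrix (Fin n) (Fin m) ℝ) (b lam : Fin m → ℝ)
    (L : EuclideanSpace ℝ (Fin n) → ℝ)
    (hL : ∀ p, L p = D p q + ∑ j, (∑ i, A i j * p i - b j) * lam j)
    {plam : EuclideanSpace ℝ (Fin n)} (hplam : plam ∈ Δ)
    (hgrad : ∀ i, gradient f plam i = gradient f q i - ∑ j, A i j * lam j) :
    (∀ p ∈ closure Δ, L plam ≤ L p) ∧
      ∀ p ∈ closure Δ, p ≠ plam → L plam < L p := by
  have hgrad' : gradient f plam = gradient f q - WithLp.toLp 2 (A *ᵥ lam) := by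
    ext i
    simpa [Matrix.mulVec, dotProduct] using hgrad i
  have hDb : D = bregman f := funext₂ hD
  have hL_eq : ∀ p, L p = L plam + bregman f p plam := fun p => by
    have := bregman_add_inner_eq hgrad' p
    simp only [hL, hDb, sum_transpose_mulVec_sub_mul]
    linarith
  have hlt : ∀ p ∈ closure Δ, p ≠ plam → L plam < L p := fun p hp hne => by
    rw [hL_eq p, lt_add_iff_pos_right]
    exact bregman_pos hsc hp (subset_closure hplam) hne
      (hdiff.differentiableAt (hopen.mem_nhds hplam))
  refine ⟨fun p hp => ?_, hlt⟩
  rcases eq_or_ne p plam with rfl | hne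
  · exact le_rfl
  · exact (hlt p hp hne).le

/-- For fixed `q ∈ Δ` and `λ ∈ ℝᵐ`, define the Lagrangian
`L(p) = D_f(p, q) + ⟪Aᵀp − b, λ⟫` on `cl(Δ)`. If `p_λ ∈ Δ` satisfies
`∇f(p_λ) = ∇f(q) − Aλ`, then `p_λ` is the unique global minimizer of `L` over `cl(Δ)`. -/
theorem lagrangian_unique_global_min {n m : ℕ} {Δ : Set (EuclideanSpace ℝ (Fin n))}
    (hne : Δ.Nonempty) (hopen : IsOpen Δ) (hconv : Convex ℝ Δ)
    {f : EuclideanSpace ℝ (Fin n) → ℝ}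
    (hcont : ContinuousOn f (closure Δ))
    (hdiff : DifferentiableOn ℝ f Δ)
    (hsc : StrictConvexOn ℝ (closure Δ) f)
    {D : EuclideanSpace ℝ (Fin n) → EuclideanSpace ℝ (Fin n) → ℝ}
    (hD : ∀ p q, D p q = f p - f q - ⟪gradient f q, p - q⟫)
    {q : EuclideanSpace ℝ (Fin n)} (hq : q ∈ Δ)
    (A : Matrix (Fin n) (Fin m) ℝ) (b lam : Fin m → ℝ)
    (L : EuclideanSpace ℝ (Fin n) → ℝ)
    (hL : ∀ p, L p = D p q + ∑ j, (∑ i, A i j * p i - b j) * lam j)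
    {plam : EuclideanSpace ℝ (Fin n)} (hplam : plam ∈ Δ)
    (hgrad : ∀ i, gradient f plam i = gradient f q i - ∑ j, A i j * lam j) :
    (∀ p ∈ closure Δ, L plam ≤ L p) ∧
      ∀ p ∈ closure Δ, p ≠ plam → L plam < L p :=
  lagrangian_unique_global_min_general hopen hdiff hsc hD A b lam L hL hplam hgrad
end

section
/- (Weak duality.) Let q ∈ Δ, let A be an n × m real matrix, b ∈ ℝᵐ, and set Ω = {p ∈ ℝⁿ : Aᵀp = b}. Fix λ ∈ ℝᵐ and suppose p_λ ∈ Δ satisfies ∇f(p_λ) = ∇f(q) − Aλ. Then for every p ∈ Ω ∩ cl(Δ), D_f(p_λ, q) + ⟨Aᵀp_λ − b, λ⟩ ≤ D_f(p, q). -/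
/-!
For any `r`, the Bregman divergence satisfies the three-point identity
`D(p, q) = D(r, q) + D(p, r) + ⟪∇f(r) - ∇f(q), p - r⟫`. Take `r = p_λ`: then
`∇f(p_λ) - ∇f(q) = -Aλ`, so for `Aᵀp = b` the last term is `⟪Aᵀp_λ - b, λ⟫`, and `D(p, p_λ) ≥ 0`
because a differentiable convex function lies above its tangent plane at `p_λ`.
-/

open scoped RealInnerProductSpace

/- Restrict `f` to the segment `[x, y]`: a convex function of one variable lies above its
tangent at `0`, i.e. its derivative there is at most its slope over `[0, 1]`. -/
theorem ConvexOn.hasFDerivAt_sub_le {E : Type*} [NormedAddCommGroup E] [NormedSpace ℝ E]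
    {s : Set E} {f : E → ℝ} {f' : E →L[ℝ] ℝ} {x y : E}
    (hf : ConvexOn ℝ s f) (hx : x ∈ s) (hy : y ∈ s) (hf' : HasFDerivAt f f' x) :
    f' (y - x) ≤ f y - f x := by
  have hsegment : Set.Icc (0 : ℝ) 1 ⊆ AffineMap.lineMap x y ⁻¹' s := fun t ht =>
    hf.1.lineMap_mem hx hy ht
  have hline : ConvexOn ℝ (Set.Icc (0 : ℝ) 1) (f ∘ AffineMap.lineMap x y) :=
    (hf.comp_affineMap _).subset hsegment (convex_Icc 0 1)
  have hderiv : HasDerivAt (f ∘ AffineMap.lineMap (k := ℝ) x y) (f' (y - x)) 0 := by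
    rw [← AffineMap.lineMap_apply_zero (k := ℝ) x y] at hf'
    exact hf'.comp_hasDerivAt (0 : ℝ) AffineMap.hasDerivAt_lineMap
  simpa [slope] using hline.le_slope_of_hasDerivAt (by simp) (by simp) one_pos hderiv

section Bregman

variable {E : Type*} [NormedAddCommGroup E] [InnerProductSpace ℝ E] [CompleteSpace E]

theorem ConvexOn.inner_gradient_sub_le {s : Set E} {f : E → ℝ} {x y : E}
    (hf : ConvexOn ℝ s f) (hx : x ∈ s) (hy : y ∈ s) (hdiff : DifferentiableAt ℝ f x) :
    ⟪gradient f x, y - x⟫ ≤ f y - f x := by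
  simpa using hf.hasFDerivAt_sub_le hx hy hdiff.hasGradientAt.hasFDerivAt

noncomputable def bregmanDiv (f : E → ℝ) (p q : E) : ℝ :=
  f p - f q - ⟪gradient f q, p - q⟫

theorem bregmanDiv_nonneg {s : Set E} {f : E → ℝ} {p q : E}
    (hf : ConvexOn ℝ s f) (hp : p ∈ s) (hq : q ∈ s) (hdiff : DifferentiableAt ℝ f q) :
    0 ≤ bregmanDiv f p q :=
  sub_nonneg.2 (hf.inner_gradient_sub_le hq hp hdiff)

theorem bregmanDiv_three_point (f : E → ℝ) (p r q : E) :
    bregmanDiv f p q =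
      bregmanDiv f r q + bregmanDiv f p r + ⟪gradient f r - gradient f q, p - r⟫ := by
  simp only [bregmanDiv, inner_sub_left, inner_sub_right]
  ring

end Bregman

open Matrix in
theorem inner_toLp_mulVec {ι κ : Type*} [Fintype ι] [Fintype κ] (A : Matrix ι κ ℝ) (w : κ → ℝ)
    (v : EuclideanSpace ℝ ι) :
    ⟪WithLp.toLp 2 (A *ᵥ w), v⟫ = ∑ j, (∑ i, A i j * v i) * w j := by
  simp only [PiLp.inner_apply, RCLike.inner_apply, conj_trivial, Matrix.mulVec, dotProduct,
    Finset.sum_mul, Finset.mul_sum]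
  rw [Finset.sum_comm]
  exact Finset.sum_congr rfl fun j _ => Finset.sum_congr rfl fun i _ => by ring

theorem bregman_weak_duality_general {n m : ℕ} {Δ : Set (EuclideanSpace ℝ (Fin n))}
    (hopen : IsOpen Δ)
    {f : EuclideanSpace ℝ (Fin n) → ℝ}
    (hdiff : DifferentiableOn ℝ f Δ)
    (hsc : StrictConvexOn ℝ (closure Δ) f)
    {D : EuclideanSpace ℝ (Fin n) → EuclideanSpace ℝ (Fin n) → ℝ}
    (hD : ∀ p q, D p q = f p - f q - ⟪gradient f q, p - q⟫)
    {q : EuclideanSpace ℝ (Fin n)}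
    (A : Matrix (Fin n) (Fin m) ℝ) (b lam : Fin m → ℝ)
    {plam : EuclideanSpace ℝ (Fin n)} (hplam : plam ∈ Δ)
    (hgrad : ∀ i, gradient f plam i = gradient f q i - ∑ j, A i j * lam j) :
    ∀ p : EuclideanSpace ℝ (Fin n), (∀ j, ∑ i, A i j * p i = b j) → p ∈ closure Δ →
      D plam q + ∑ j, (∑ i, A i j * plam i - b j) * lam j ≤ D p q := by
  intro p hAp hp
  obtain rfl : D = bregmanDiv f := funext₂ hD
  have hgrad_sub : gradient f plam - gradient f q = -WithLp.toLp 2 (A.mulVec lam) := by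
    ext i
    simp [hgrad i, Matrix.mulVec, dotProduct]
  have hgap : ⟪gradient f plam - gradient f q, p - plam⟫ =
      ∑ j, (∑ i, A i j * plam i - b j) * lam j := by
    rw [hgrad_sub, inner_neg_left, inner_toLp_mulVec, ← Finset.sum_neg_distrib]
    refine Finset.sum_congr rfl fun j _ => ?_
    simp only [← hAp j, PiLp.sub_apply, mul_sub, Finset.sum_sub_distrib]
    ring
  have hnonneg : 0 ≤ bregmanDiv f p plam :=
    bregmanDiv_nonneg hsc.convexOn hp (subset_closure hplam)
      (hdiff.differentiableAt (hopen.mem_nhds hplam))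
  rw [bregmanDiv_three_point f p plam q, hgap]
  linarith

/-- (Weak duality.) For `q ∈ Δ`, `λ ∈ ℝᵐ`, and `Ω = {p : Aᵀp = b}`:
if `p_λ ∈ Δ` satisfies `∇f(p_λ) = ∇f(q) − Aλ`, then for every `p ∈ Ω ∩ cl(Δ)`,
`D_f(p_λ, q) + ⟪Aᵀp_λ − b, λ⟫ ≤ D_f(p, q)`. -/
theorem bregman_weak_duality {n m : ℕ} {Δ : Set (EuclideanSpace ℝ (Fin n))}
    (hne : Δ.Nonempty) (hopen : IsOpen Δ) (hconv : Convex ℝ Δ)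
    {f : EuclideanSpace ℝ (Fin n) → ℝ}
    (hcont : ContinuousOn f (closure Δ))
    (hdiff : DifferentiableOn ℝ f Δ)
    (hsc : StrictConvexOn ℝ (closure Δ) f)
    {D : EuclideanSpace ℝ (Fin n) → EuclideanSpace ℝ (Fin n) → ℝ}
    (hD : ∀ p q, D p q = f p - f q - ⟪gradient f q, p - q⟫)
    {q : EuclideanSpace ℝ (Fin n)} (hq : q ∈ Δ)
    (A : Matrix (Fin n) (Fin m) ℝ) (b lam : Fin m → ℝ)
    {plam : EuclideanSpace ℝ (Fin n)} (hplam : plam ∈ Δ)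
    (hgrad : ∀ i, gradient f plam i = gradient f q i - ∑ j, A i j * lam j) :
    ∀ p : EuclideanSpace ℝ (Fin n), (∀ j, ∑ i, A i j * p i = b j) → p ∈ closure Δ →
      D plam q + ∑ j, (∑ i, A i j * plam i - b j) * lam j ≤ D p q :=
  bregman_weak_duality_general hopen hdiff hsc hD A b lam hplam hgrad
end

section
/- (Algebraic double robustness identity under a linear conditional treatment effect; key step of Theorem 2.) Let n ≥ 1, let Z₁, …, Zₙ ∈ {0, 1}, let c_j(X_i) ∈ ℝ for i = 1, …, n and j = 1, …, m with c_1(X_i) = 1 for all i, and let p̂₁, …, p̂ₙ ∈ ℝ satisfy Σᵢ p̂ᵢ (2Zᵢ − 1) c_j(Xᵢ) = 0 and Σᵢ p̂ᵢ Zᵢ c_j(Xᵢ) = Σᵢ c_j(Xᵢ) for all j = 1, …, m. For α₁, …, α_m, β₁, …, β_m ∈ ℝ define μ̂₀(Xᵢ) = Σ_j c_j(Xᵢ) β_j and μ̂₁(Xᵢ) = Σ_j c_j(Xᵢ)(α_j + β_j). Then (1/n) Σᵢ p̂ᵢ Zᵢ μ̂₁(Xᵢ) − (1/n) Σᵢ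 p̂ᵢ (1 − Zᵢ) μ̂₀(Xᵢ) = (1/n) Σᵢ Σ_j c_j(Xᵢ) α_j. -/
/-- (Algebraic double robustness identity under a linear conditional
treatment effect.) If the weights `phat` satisfy `Σᵢ phatᵢ(2Zᵢ − 1)c_j(Xᵢ) = 0` and
`Σᵢ phatᵢ Zᵢ c_j(Xᵢ) = Σᵢ c_j(Xᵢ)` for all `j`, and the fitted outcome models are
`μ̂₀(Xᵢ) = Σ_j c_j(Xᵢ)β_j` and `μ̂₁(Xᵢ) = Σ_j c_j(Xᵢ)(α_j + β_j)`, then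
`(1/n) Σᵢ phatᵢ Zᵢ μ̂₁(Xᵢ) − (1/n) Σᵢ phatᵢ(1 − Zᵢ)μ̂₀(Xᵢ) = (1/n) Σᵢ Σ_j c_j(Xᵢ)α_j`. -/
theorem double_robustness_linear_cate {n m : ℕ} (hn : 1 ≤ n) (hm : 0 < m)
    (Z : Fin n → ℝ) (hZ : ∀ i, Z i = 0 ∨ Z i = 1)
    (c : Fin n → Fin m → ℝ) (hfirst : ∀ i, c i ⟨0, hm⟩ = 1)
    (phat : Fin n → ℝ)
    (hbal : ∀ j, ∑ i, phat i * (2 * Z i - 1) * c i j = 0)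
    (hbal' : ∀ j, ∑ i, phat i * Z i * c i j = ∑ i, c i j)
    (α β : Fin m → ℝ)
    (μ₀ μ₁ : Fin n → ℝ)
    (hμ₀ : ∀ i, μ₀ i = ∑ j, c i j * β j)
    (hμ₁ : ∀ i, μ₁ i = ∑ j, c i j * (α j + β j)) :
    (1 / (n : ℝ)) * ∑ i, phat i * Z i * μ₁ i
      - (1 / (n : ℝ)) * ∑ i, phat i * (1 - Z i) * μ₀ i
      = (1 / (n : ℝ)) * ∑ i, ∑ j, c i j * α j := by
  have key0 : ∀ j, ∑ i, phat i * (1 - Z i) * c i j = ∑ i, c i j := by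
    intro j
    have h : ∀ i ∈ Finset.univ, phat i * (1 - Z i) * c i j
        = phat i * Z i * c i j - phat i * (2 * Z i - 1) * c i j := by
      intro i _; ring
    rw [Finset.sum_congr rfl h, Finset.sum_sub_distrib, hbal j, hbal' j, sub_zero]
  have L1 : ∑ i, phat i * Z i * μ₁ i = ∑ j, (α j + β j) * ∑ i, c i j := by
    simp only [hμ₁, Finset.mul_sum]
    rw [Finset.sum_comm]
    refine Finset.sum_congr rfl fun j _ => ?_
    rw [← Finset.mul_sum, ← hbal' j, Finset.mul_sum]
    exact Finset.sum_congr rfl fun i _ => by ring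
  have L0 : ∑ i, phat i * (1 - Z i) * μ₀ i = ∑ j, β j * ∑ i, c i j := by
    simp only [hμ₀, Finset.mul_sum]
    rw [Finset.sum_comm]
    refine Finset.sum_congr rfl fun j _ => ?_
    rw [← Finset.mul_sum, ← key0 j, Finset.mul_sum]
    exact Finset.sum_congr rfl fun i _ => by ring
  have R : ∑ i, ∑ j, c i j * α j = ∑ j, α j * ∑ i, c i j := by
    rw [Finset.sum_comm]
    exact Finset.sum_congr rfl fun j _ => by rw [Finset.mul_sum]; exact Finset.sum_congr rfl fun i _ => by ring
  rw [L1, L0, R, ← mul_sub, ← Finset.sum_sub_distrib]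
  congr 1
  exact Finset.sum_congr rfl fun j _ => by ring
end
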